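/- For every element w of the 3-strand braid group, each entry of the matrix B_{-t}(w) is a definite Laurent polynomial; that is, all coefficients of each entry have the same sign. -/

import Mathlib

open LaurentPolynomial

/-- Letters generating the 3-strand braid group: σ₁, σ₂ and their formal inverses. -/
inductive BLetter
  | s1 | s2 | s1inv | s2inv
deriving DecidableEq

/-- The reduced Burau representation `B_{-t}` (i.e. with `-t` substituted for the
variable) over the Laurent polynomials `ℤ[t,t⁻¹]`, on each letter. -/
noncomputable def burauNegLetter : BLetter → Matrix (Fin 2) (Fin 2) (LaurentPolynomial ℤ)
  | .s1 => !![T 1, 1; 0, 1]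
  | .s2 => !![1, 0; -T 1, T 1]
  | .s1inv => !![T (-1), -T (-1); 0, 1]
  | .s2inv => !![1, 0; 1, T (-1)]

/-- The matrix `B_{-t}(w)` of a word in the generators and their inverses. -/
noncomputable def burauNegWord (w : List BLetter) : Matrix (Fin 2) (Fin 2) (LaurentPolynomial ℤ) :=
  (w.map burauNegLetter).prod

/-- A Laurent polynomial is *definite* when all of its coefficients have the same
sign (all `≥ 0` or all `≤ 0`). -/
def LaurentDefinite (p : LaurentPolynomial ℤ) : Prop :=
  (∀ n : ℤ, 0 ≤ p.coeff n) ∨ (∀ n : ℤ, p.coeff n ≤ 0)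

namespace BurauAux

abbrev L := LaurentPolynomial ℤ

/-- All coefficients nonnegative. -/
def NN (p : L) : Prop := ∀ n : ℤ, 0 ≤ p.coeff n

lemma TT (a b : ℤ) : (T a : L) * T b = T (a + b) := (T_add a b).symm

lemma T_mul_apply (k : ℤ) (p : L) (n : ℤ) : (T k * p : L).coeff n = p.coeff (n - k) := by
  have h := AddMonoidAlgebra.coeff_single_mul_apply p (1 : ℤ) k n
  rw [one_mul, neg_add_eq_sub] at h
  exact h

lemma NN.add {p q : L} (hp : NN p) (hq : NN q) : NN (p + q) := by
  intro n
  have e : (p + q : L).coeff n = p.coeff n + q.coeff n := rfl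
  rw [e]; exact add_nonneg (hp n) (hq n)

lemma NN.Tmul {p : L} (hp : NN p) (k : ℤ) : NN (T k * p) := by
  intro n; rw [T_mul_apply]; exact hp _

lemma NN.ofEq {q : L} (hq : NN q) {p : L} (h : p = q) : NN p := h ▸ hq

lemma NN.unT {p : L} (h : NN (T 1 * p)) : NN p := by
  intro n
  have hh := h (n + 1)
  rwa [T_mul_apply, add_sub_cancel_right] at hh

lemma NN_zero : NN (0 : L) := fun _ => le_of_eq rfl

lemma NN_one : NN (1 : L) := by
  intro n
  rw [← T_zero, T_apply]
  split_ifs <;> norm_num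

/-- Tags for the four kinds of good column pairs. -/
inductive Tg | bo | tt | u | v

/-- The inductively generated family of good column pairs for the positive Burau
monoid at `-t` (normalised signs). -/
inductive St : Tg → L → L → Prop
  | boBase (p : L) (h : NN p) : St .bo p 0
  | boA {p q : L} : St .bo p q → St .bo (T 1 * p + q) q
  | boAT {p q : L} : St .tt p q → St .bo (T 1 * p + q) q
  | tDiag (p : L) (h : NN p) : St .tt p p
  | tU {p q : L} : St .u p q → St .tt (-(T 1 * p + q)) (-q)
  | uBase (q : L) (h : NN q) : St .u 0 (-q)
  | uB {p q : L} : St .u p q → St .u p (T 1 * (q - p))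
  | uV {p q : L} : St .v p q → St .u p (T 1 * (q - p))
  | vBo {p q : L} : St .bo p q → St .v p (T 1 * (q - p))

lemma St.congr {tg : Tg} {p q p' q' : L} (h : St tg p q) (hp : p = p') (hq : q = q') :
    St tg p' q' := hp ▸ hq ▸ h

/-- Scaling invariance. -/
lemma St.scale {tg : Tg} {a b : L} (k : ℤ) (h : St tg a b) : St tg (T k * a) (T k * b) := by
  induction h with
  | boBase p hp => exact (St.boBase _ (hp.Tmul k)).congr rfl (by ring)
  | boA h ih => exact ih.boA.congr (by ring) rfl
  | boAT h ih => exact ih.boAT.congr (by ring) rfl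
  | tDiag p hp => exact St.tDiag _ (hp.Tmul k)
  | tU h ih => exact ih.tU.congr (by ring) (by ring)
  | uBase q hq => exact (St.uBase _ (hq.Tmul k)).congr (by ring) (by ring)
  | uB h ih => exact ih.uB.congr rfl (by ring)
  | uV h ih => exact ih.uV.congr rfl (by ring)
  | vBo h ih => exact ih.vBo.congr rfl (by ring)

/-- Sign payload of each state. -/
def Pay : Tg → L → L → Prop
  | .bo, p, q => NN q ∧ NN (p - q)
  | .tt, p, q => NN p ∧ NN (q - p)
  | .u, p, q => NN p ∧ NN (-(q + T 1 * p))
  | .v, p, q => NN (-q) ∧ NN (q + T 1 * p)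

lemma St.pay {tg : Tg} {a b : L} (h : St tg a b) : Pay tg a b := by
  induction h with
  | boBase p hp => exact ⟨NN_zero, hp.ofEq (by ring)⟩
  | @boA p q h ih =>
      obtain ⟨hq, hpq⟩ := ih
      exact ⟨hq, (((hpq.add hq).Tmul 1).ofEq (by ring) : NN (T 1 * p + q - q))⟩
  | @boAT p q h ih =>
      obtain ⟨hp, hqp⟩ := ih
      exact ⟨(hqp.add hp).ofEq (by ring), (hp.Tmul 1).ofEq (by ring)⟩
  | tDiag p hp => exact ⟨hp, NN_zero.ofEq (by ring)⟩
  | @tU p q h ih =>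
      obtain ⟨hp, he⟩ := ih
      exact ⟨he.ofEq (by ring), (hp.Tmul 1).ofEq (by ring)⟩
  | uBase q hq => exact ⟨NN_zero, hq.ofEq (by ring)⟩
  | @uB p q h ih =>
      obtain ⟨hp, he⟩ := ih
      have hnq : NN (-q) := (he.add (hp.Tmul 1)).ofEq (by ring)
      exact ⟨hp, (hnq.Tmul 1).ofEq (by ring)⟩
  | @uV p q h ih =>
      obtain ⟨hnq, he⟩ := ih
      have hp : NN p := NN.unT ((he.add hnq).ofEq (by ring))
      exact ⟨hp, (hnq.Tmul 1).ofEq (by ring)⟩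
  | @vBo p q h ih =>
      obtain ⟨hq, hpq⟩ := ih
      exact ⟨(hpq.Tmul 1).ofEq (by ring), (hq.Tmul 1).ofEq (by ring)⟩

/-- Same-sign good pairs. -/
def Sm (p q : L) : Prop := St .tt p q ∨ St .bo p q
/-- Opposite-sign good pairs. -/
def Op (p q : L) : Prop := St .u p q ∨ St .v p q

lemma Sm.congr {p q p' q' : L} (h : Sm p q) (hp : p = p') (hq : q = q') : Sm p' q' :=
  hp ▸ hq ▸ h

lemma Op.congr {p q p' q' : L} (h : Op p q) (hp : p = p') (hq : q = q') : Op p' q' :=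
  hp ▸ hq ▸ h

lemma Sm.A {p q : L} (h : Sm p q) : St .bo (T 1 * p + q) q :=
  h.elim (fun h => h.boAT) (fun h => h.boA)

lemma Op.B {p q : L} (h : Op p q) : St .u p (T 1 * (q - p)) :=
  h.elim (fun h => h.uB) (fun h => h.uV)

lemma Sm.scale {p q : L} (k : ℤ) (h : Sm p q) : Sm (T k * p) (T k * q) :=
  h.elim (fun h => Or.inl (h.scale k)) (fun h => Or.inr (h.scale k))

lemma Op.scale {p q : L} (k : ℤ) (h : Op p q) : Op (T k * p) (T k * q) :=
  h.elim (fun h => Or.inl (h.scale k)) (fun h => Or.inr (h.scale k))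

lemma T1T1 (x : L) : T 1 * (T (-1) * x) = x := by
  rw [← mul_assoc, TT]; norm_num

lemma T1T1' (x : L) : T (-1) * (T 1 * x) = x := by
  rw [← mul_assoc, TT]; norm_num

lemma downA (x y : L) : -(T 1 * (T (-1) * x) + T (-1) * -(T 1 * y)) = y - x := by
  have h2 : T (-1) * -(T 1 * y) = -y := by
    rw [show T (-1) * -(T 1 * y) = -(T (-1) * (T 1 * y)) by ring, T1T1']
  rw [T1T1, h2]; ring

lemma downB (y : L) : -(T (-1) * -(T 1 * y)) = y := by
  rw [show T (-1) * -(T 1 * y) = -(T (-1) * (T 1 * y)) by ring, T1T1', neg_neg]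

/-- The key closure data carried by each state. -/
def Phi : Tg → L → L → Prop
  | .bo, p, q => St .u q (-(T 1 * (T 1 * p + q))) ∧ Sm (p - q) p ∧ Op (T 1 * q) (T 1 * (q - p))
  | .tt, p, q => St .u q (-(T 1 * (T 1 * p + q))) ∧ Op q (-(T 1 * p)) ∧ Sm p (T 1 * (q - p))
  | .u, p, q => St .v (-q) (T 1 * (T 1 * p + q)) ∧ St .bo (p - q) p ∧
      Sm (-(T 1 * p + q)) (T 1 * (T 1 * p))
  | .v, p, q => St .bo (p - q) p ∧ Sm (-(T 1 * q)) (T 1 * (T 1 * p)) ∧ Op (T 1 * p + q) q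

lemma St.mega {tg : Tg} {a b : L} (h : St tg a b) : Phi tg a b := by
  induction h with
  | boBase p hp =>
      exact ⟨(St.uBase (T 1 * (T 1 * p)) ((hp.Tmul 1).Tmul 1)).congr rfl (by ring),
        Or.inl ((St.tDiag p hp).congr (by ring) rfl),
        Or.inl ((St.uBase (T 1 * p) (hp.Tmul 1)).congr (by ring) (by ring))⟩
  | @boA p q h ih =>
      obtain ⟨ha, hb, hc⟩ := ih
      refine ⟨ha.uB.congr rfl (by ring), ?_, Or.inl (hc.B.congr rfl (by ring))⟩
      · exact Or.inl (((ha.scale (-1)).tU).congr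
          ((downA q (T 1 * p + q)).trans (by ring)) (downB (T 1 * p + q)))
  | @boAT p q h ih =>
      obtain ⟨ha, hb, hc⟩ := ih
      refine ⟨ha.uB.congr rfl (by ring), ?_, (hb.scale 1).congr rfl (by ring)⟩
      · exact Or.inl (((ha.scale (-1)).tU).congr
          ((downA q (T 1 * p + q)).trans (by ring)) (downB (T 1 * p + q)))
  | tDiag p hp =>
      exact ⟨((St.boBase p hp).vBo.uV).congr rfl (by ring),
        Or.inr ((St.boBase p hp).vBo.congr rfl (by ring)),
        Or.inr ((St.boBase p hp).congr rfl (by ring))⟩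
  | @tU p q h ih =>
      obtain ⟨ha, hb, hc⟩ := ih
      exact ⟨ha.uV.congr rfl (by ring), Or.inr (ha.congr rfl (by ring)),
        hc.congr rfl (by ring)⟩
  | uBase q hq =>
      exact ⟨((St.boBase q hq).vBo).congr (by ring) (by ring),
        (St.boBase q hq).congr (by ring) rfl,
        Or.inr ((St.boBase q hq).congr (by ring) (by ring))⟩
  | @uB p q h ih =>
      obtain ⟨ha, hb, hc⟩ := ih
      exact ⟨((hb.scale 1).vBo).congr (by ring) (by ring),
        hb.boA.congr (by ring) rfl,
        Or.inr (hc.A.congr (by ring) rfl)⟩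
  | @uV p q h ih =>
      obtain ⟨ha, hb, hc⟩ := ih
      exact ⟨((ha.scale 1).vBo).congr (by ring) (by ring),
        ha.boA.congr (by ring) rfl,
        hb.congr (by ring) rfl⟩
  | @vBo p q h ih =>
      obtain ⟨ha, hb, hc⟩ := ih
      exact ⟨hb.A.congr (by ring) rfl,
        ((hb.scale 1).scale 1).congr (by ring) rfl,
        hc.congr (by ring) rfl⟩

/-- A pair is good if it is in one of the four states. -/
def Colr (p q : L) : Prop := St .bo p q ∨ St .tt p q ∨ St .u p q ∨ St .v p q

/-- A pair is good up to a global sign. -/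
def GP (p q : L) : Prop := Colr p q ∨ Colr (-p) (-q)

lemma Colr.congr {p q p' q' : L} (h : Colr p q) (hp : p = p') (hq : q = q') : Colr p' q' :=
  hp ▸ hq ▸ h

lemma GP.congr {p q p' q' : L} (h : GP p q) (hp : p = p') (hq : q = q') : GP p' q' :=
  hp ▸ hq ▸ h

lemma Colr.stepA {p q : L} (h : Colr p q) :
    Colr (T 1 * p + q) q ∨ Colr (-(T 1 * p + q)) (-q) := by
  rcases h with h | h | h | h
  · exact Or.inl (Or.inl h.boA)
  · exact Or.inl (Or.inl h.boAT)
  · exact Or.inr (Or.inr (Or.inl h.tU))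
  · rcases h.mega.2.2 with h' | h'
    · exact Or.inl (Or.inr (Or.inr (Or.inl h')))
    · exact Or.inl (Or.inr (Or.inr (Or.inr h')))

lemma Colr.stepB {p q : L} (h : Colr p q) : Colr p (T 1 * (q - p)) := by
  rcases h with h | h | h | h
  · exact Or.inr (Or.inr (Or.inr h.vBo))
  · rcases h.mega.2.2 with h' | h'
    · exact Or.inr (Or.inl h')
    · exact Or.inl h'
  · exact Or.inr (Or.inr (Or.inl h.uB))
  · exact Or.inr (Or.inr (Or.inl h.uV))

lemma Colr.scale {p q : L} (k : ℤ) (h : Colr p q) : Colr (T k * p) (T k * q) := by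
  rcases h with h | h | h | h
  exacts [Or.inl (h.scale k), Or.inr (Or.inl (h.scale k)),
    Or.inr (Or.inr (Or.inl (h.scale k))), Or.inr (Or.inr (Or.inr (h.scale k)))]

lemma GP.stepA {p q : L} (h : GP p q) : GP (T 1 * p + q) q := by
  rcases h with h | h
  · exact h.stepA
  · rcases h.stepA with h' | h'
    · exact Or.inr (h'.congr (by ring) rfl)
    · exact Or.inl (h'.congr (by ring) (by ring))

lemma GP.stepB {p q : L} (h : GP p q) : GP p (T 1 * (q - p)) := by
  rcases h with h | h
  · exact Or.inl h.stepB
  · exact Or.inr (h.stepB.congr rfl (by ring))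

lemma GP.neg {p q : L} (h : GP p q) : GP (-p) (-q) := by
  rcases h with h | h
  · exact Or.inr (h.congr (by ring) (by ring))
  · exact Or.inl (h.congr (by ring) (by ring))

lemma GP.scale {p q : L} (k : ℤ) (h : GP p q) : GP (T k * p) (T k * q) := by
  rcases h with h | h
  · exact Or.inl (h.scale k)
  · exact Or.inr ((h.scale k).congr (by ring) (by ring))

lemma GP.unit {p q : L} (k : ℤ) (h : GP p q) : GP (-T k * p) (-T k * q) :=
  ((h.scale k).neg).congr (by ring) (by ring)

lemma defOfNN {p : L} (h : NN p) : LaurentDefinite p := Or.inl h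

lemma defOfNNneg {p : L} (h : NN (-p)) : LaurentDefinite p := by
  refine Or.inr fun n => ?_
  have hh := h n
  have e : (-p : L).coeff n = -(p.coeff n) := rfl
  rw [e] at hh
  omega

lemma Colr.definite {p q : L} (h : Colr p q) : LaurentDefinite p ∧ LaurentDefinite q := by
  rcases h with h | h | h | h
  · obtain ⟨hq, hpq⟩ := h.pay
    exact ⟨defOfNN ((hpq.add hq).ofEq (by ring)), defOfNN hq⟩
  · obtain ⟨hp, hqp⟩ := h.pay
    exact ⟨defOfNN hp, defOfNN ((hqp.add hp).ofEq (by ring))⟩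
  · obtain ⟨hp, he⟩ := h.pay
    exact ⟨defOfNN hp, defOfNNneg ((he.add (hp.Tmul 1)).ofEq (by ring))⟩
  · obtain ⟨hnq, he⟩ := h.pay
    exact ⟨defOfNN (NN.unT ((he.add hnq).ofEq (by ring))), defOfNNneg hnq⟩

lemma defFlip {p : L} (h : LaurentDefinite (-p)) : LaurentDefinite p := by
  have e : ∀ n : ℤ, (-p : L).coeff n = -(p.coeff n) := fun _ => rfl
  rcases h with h | h
  · refine Or.inr fun n => ?_
    have hh := h n; rw [e] at hh; omega
  · refine Or.inl fun n => ?_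
    have hh := h n; rw [e] at hh; omega

lemma GP.definite {p q : L} (h : GP p q) : LaurentDefinite p ∧ LaurentDefinite q := by
  rcases h with h | h
  · exact h.definite
  · obtain ⟨h1, h2⟩ := h.definite
    exact ⟨defFlip h1, defFlip h2⟩

/-! ### Matrix level -/

abbrev Mx := Matrix (Fin 2) (Fin 2) L

/-- All columns of a matrix are good pairs. -/
def CG (X : Mx) : Prop := ∀ j : Fin 2, GP (X 0 j) (X 1 j)

lemma mul_apply_zero (a b c d : L) (X : Mx) (j : Fin 2) :
    ((!![a, b; c, d] : Mx) * X) 0 j = a * X 0 j + b * X 1 j := by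
  simp [Matrix.mul_apply, Fin.sum_univ_two]

lemma mul_apply_one (a b c d : L) (X : Mx) (j : Fin 2) :
    ((!![a, b; c, d] : Mx) * X) 1 j = c * X 0 j + d * X 1 j := by
  simp [Matrix.mul_apply, Fin.sum_univ_two]

lemma s1_apply0 (X : Mx) (j : Fin 2) :
    (burauNegLetter .s1 * X) 0 j = T 1 * X 0 j + X 1 j := by
  rw [burauNegLetter, mul_apply_zero]; ring

lemma s1_apply1 (X : Mx) (j : Fin 2) :
    (burauNegLetter .s1 * X) 1 j = X 1 j := by
  rw [burauNegLetter, mul_apply_one]; ring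

lemma s2_apply0 (X : Mx) (j : Fin 2) :
    (burauNegLetter .s2 * X) 0 j = X 0 j := by
  rw [burauNegLetter, mul_apply_zero]; ring

lemma s2_apply1 (X : Mx) (j : Fin 2) :
    (burauNegLetter .s2 * X) 1 j = T 1 * (X 1 j - X 0 j) := by
  rw [burauNegLetter, mul_apply_one]; ring

lemma CG.M1 {X : Mx} (h : CG X) : CG (burauNegLetter .s1 * X) := by
  intro j
  rw [s1_apply0, s1_apply1]
  exact (h j).stepA

lemma CG.M2 {X : Mx} (h : CG X) : CG (burauNegLetter .s2 * X) := by
  intro j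
  rw [s2_apply0, s2_apply1]
  exact (h j).stepB

lemma CG.M1inv {X : Mx} (h : CG X) : CG (burauNegLetter .s1inv * X) := by
  intro j
  have gY := (((((h.M2).M1).M2).M1).M2) j
  simp only [s1_apply0, s1_apply1, s2_apply0, s2_apply1] at gY
  have gU := gY.unit (-3)
  have e0 : (burauNegLetter .s1inv * X) 0 j = T (-1) * X 0 j + -T (-1) * X 1 j := by
    rw [burauNegLetter, mul_apply_zero]
  have e1 : (burauNegLetter .s1inv * X) 1 j = X 1 j := by
    rw [burauNegLetter, mul_apply_one]; ring
  rw [e0, e1]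
  refine gU.congr ?_ ?_ <;>
  · ring_nf
    simp only [T_pow, TT]
    norm_num
    try ring

lemma CG.M2inv {X : Mx} (h : CG X) : CG (burauNegLetter .s2inv * X) := by
  intro j
  have gY := (((((h.M1).M2).M1).M2).M1) j
  simp only [s1_apply0, s1_apply1, s2_apply0, s2_apply1] at gY
  have gU := gY.unit (-3)
  have e0 : (burauNegLetter .s2inv * X) 0 j = X 0 j := by
    rw [burauNegLetter, mul_apply_zero]; ring
  have e1 : (burauNegLetter .s2inv * X) 1 j = X 0 j + T (-1) * X 1 j := by
    rw [burauNegLetter, mul_apply_one]; ring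
  rw [e0, e1]
  refine gU.congr ?_ ?_ <;>
  · ring_nf
    simp only [T_pow, TT]
    norm_num
    try ring

lemma cg_one : CG (1 : Mx) := by
  intro j
  fin_cases j
  · show GP ((1 : Mx) 0 0) ((1 : Mx) 1 0)
    have e0 : (1 : Mx) 0 0 = 1 := rfl
    have e1 : (1 : Mx) 1 0 = 0 := rfl
    rw [e0, e1]
    exact Or.inl (Or.inl (St.boBase 1 NN_one))
  · show GP ((1 : Mx) 0 1) ((1 : Mx) 1 1)
    have e0 : (1 : Mx) 0 1 = 0 := rfl
    have e1 : (1 : Mx) 1 1 = 1 := rfl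
    rw [e0, e1]
    exact Or.inr (Or.inr (Or.inr (Or.inl ((St.uBase 1 NN_one).congr (by ring) rfl))))

lemma cg_word (w : List BLetter) : CG (burauNegWord w) := by
  induction w with
  | nil => simpa [burauNegWord] using cg_one
  | cons a w ih =>
      have e : burauNegWord (a :: w) = burauNegLetter a * burauNegWord w := by
        simp [burauNegWord]
      rw [e]
      cases a
      · exact ih.M1
      · exact ih.M2
      · exact ih.M1inv
      · exact ih.M2inv

end BurauAux

/-- For every element `w` of the 3-strand braid group, each entry of
`B_{-t}(w)` is a definite Laurent polynomial. -/
theorem burauNeg_entries_definite (w : List BLetter) (i j : Fin 2) :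
    LaurentDefinite (burauNegWord w i j) := by
  have h := BurauAux.cg_word w j
  fin_cases i
  · exact h.definite.1
  · exact h.definite.2
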